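/- arXiv:2307.00288 — 2 statements merged into one kernel-verified Lean document; each statement's English description precedes it below -/
import Mathlib

section
/- Let p ≥ 1, N ≥ 2p−1, and let b_0,…,b_N : I → ℂ be differentiable nowhere-vanishing functions on an interval I solving the finite Bogoyavlensky lattice b_i' = b_i(Σ_{j=1}^p b_{i+j} − Σ_{j=1}^p b_{i−j}) for i = 0,…,N (with b_l ≡ 0 for l < 0 and l > N). Let S̃_k^n(t) := (L2_N(t)^k)_{0,n−1}. Suppose C̃_0,…,C̃_{N+p} : I → ℂ are differentiable and satisfy S̃_k^l(t) = Σ_{v=0}^{N+p} C̃_v(t)·S̃_{k−v−1}^l(t) for all integers k ≥ N+p+1, all 1 ≤ l ≤ p, and all t ∈ I, and suppose Δ̃_{N+p}(t) ≠ 0 for all t ∈ I, where Δ̃_{N+p}(t) = det(α̃_{ij}(t))_{i,j=0}^{N+p} with α̃_{ij} = S̃_{i+⌊j/p⌋}^{(j mod p)+1}. Then each C̃_v is constant on I (i.e., C̃_0,…,C̃_{N+p} are first integrals of the lattice). -/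
open scoped BigOperators

noncomputable section

/-- The `(N+p+1)×(N+p+1)` matrix `L2_N`: `(L2_N)_{i,i+1} = 1`, `(L2_N)_{i+p,i} = b_i`,
all other entries zero. -/
def L2N (p N : ℕ) (b : ℕ → ℂ) : Matrix (Fin (N + p + 1)) (Fin (N + p + 1)) ℂ :=
  Matrix.of fun i j => if (j : ℕ) = (i : ℕ) + 1 then 1
    else if (i : ℕ) = (j : ℕ) + p then b (j : ℕ) else 0

open Fin.NatCast in
/-- The moments of `L2_N`: `S̃_k^n = (L2_N^k)_{0,n−1}`. -/
def momL2N (p N : ℕ) (b : ℕ → ℂ) (k n : ℕ) : ℂ :=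
  (L2N p N b ^ k) ((0 : ℕ) : Fin (N + p + 1)) ((n - 1 : ℕ) : Fin (N + p + 1))

/-!
`L2N` obeys the Lax equation `L' = [A, L]`, where `A` is the `(p+1)`-st superdiagonal shift plus
the diagonal matrix with entries `∑_{m=0}^{p} b_{i-m}`. Since `x - L` obeys the same equation,
Jacobi's formula gives `(det (x - L))' = tr (adj (x - L) * [A, x - L]) = 0`: the characteristic
polynomial of `L` is constant on `I`. By Cayley–Hamilton the moments satisfy the recurrence whose
coefficients are (up to sign) the coefficients of that polynomial, and `Δ̃_{N+p} ≠ 0` makes the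
coefficients of such a recurrence unique. Hence each `C̃_v` is a coefficient of a constant
polynomial.
-/

open Finset

namespace Matrix

variable {ι : Type*} [Fintype ι] [DecidableEq ι]

theorem trace_adjugate_mul_commutator {R : Type*} [CommRing R] (M A : Matrix ι ι R) :
    trace (M.adjugate * (A * M - M * A)) = 0 := by
  rw [Matrix.mul_sub, trace_sub, ← Matrix.mul_assoc, trace_mul_comm, ← Matrix.mul_assoc,
    ← Matrix.mul_assoc, mul_adjugate, adjugate_mul, sub_self]

theorem trace_adjugate_mul_eq_sum_det_updateCol {R : Type*} [CommRing R] (M M' : Matrix ι ι R) :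
    trace (M.adjugate * M') = ∑ i, (M.updateCol i fun r => M' r i).det := by
  refine sum_congr rfl fun i _ => ?_
  rw [diag_apply, ← cramer_apply, cramer_eq_adjugate_mulVec]
  simp [mul_apply, mulVec, dotProduct]

variable {𝕜 𝔸 : Type*} [NontriviallyNormedField 𝕜] [NormedCommRing 𝔸] [NormedAlgebra 𝕜 𝔸]

theorem hasDerivWithinAt_det {M : 𝕜 → Matrix ι ι 𝔸} {M' : Matrix ι ι 𝔸} {s : Set 𝕜} {t : 𝕜}
    (h : ∀ i j, HasDerivWithinAt (fun u => M u i j) (M' i j) s t) :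
    HasDerivWithinAt (fun u => (M u).det) (trace ((M t).adjugate * M')) s t := by
  have hdet : HasDerivWithinAt (fun u => (M u).det)
      (∑ σ : Equiv.Perm ι, (Equiv.Perm.sign σ : 𝔸) *
        ∑ i, (∏ j ∈ univ.erase i, M t (σ j) j) • M' (σ i) i) s t := by
    simp only [det_apply']
    exact HasDerivWithinAt.fun_sum fun σ _ =>
      (HasDerivWithinAt.fun_finsetProd fun i _ => h (σ i) i).const_mul _
  convert hdet using 1
  rw [trace_adjugate_mul_eq_sum_det_updateCol]
  simp only [det_apply', mul_sum, smul_eq_mul]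
  rw [sum_comm]
  refine sum_congr rfl fun σ _ => sum_congr rfl fun i _ => ?_
  rw [← mul_prod_erase univ _ (mem_univ i), updateCol_self,
    prod_congr rfl fun j hj => updateCol_ne (ne_of_mem_erase hj), mul_comm]
  simp [mul_comm]

end Matrix

section LaxPair

variable {ι 𝕜 𝔸 : Type*} [Fintype ι] [DecidableEq ι] [RCLike 𝕜] [NormedCommRing 𝔸]
  [NormedAlgebra 𝕜 𝔸]

def IsLaxPairOn (L A : 𝕜 → Matrix ι ι 𝔸) (s : Set 𝕜) : Prop :=
  ∀ t ∈ s, ∀ i j, HasDerivWithinAt (fun u => L u i j) ((A t * L t - L t * A t) i j) s t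

namespace IsLaxPairOn

variable {L A : 𝕜 → Matrix ι ι 𝔸} {s : Set 𝕜}

theorem scalar_sub (h : IsLaxPairOn L A s) (x : 𝔸) :
    IsLaxPairOn (fun u => Matrix.scalar ι x - L u) A s := by
  intro t ht i j
  have hcomm : A t * (Matrix.scalar ι x - L t) - (Matrix.scalar ι x - L t) * A t =
      -(A t * L t - L t * A t) := by
    rw [Matrix.mul_sub, Matrix.sub_mul, (Matrix.scalar_commute x (fun _ => mul_comm _ _) _).eq]
    abel
  rw [hcomm, Matrix.neg_apply]
  exact (h t ht i j).const_sub (Matrix.scalar ι x i j)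

theorem det_eq (h : IsLaxPairOn L A s) (hs : Convex ℝ s) {t t' : 𝕜} (ht : t ∈ s)
    (ht' : t' ∈ s) : (L t).det = (L t').det := by
  have hderiv : ∀ u ∈ s, HasDerivWithinAt (fun u => (L u).det) 0 s u := fun u hu => by
    simpa [Matrix.trace_adjugate_mul_commutator] using Matrix.hasDerivWithinAt_det (h u hu)
  simpa [sub_eq_zero, eq_comm] using
    hs.norm_image_sub_le_of_norm_hasDerivWithin_le hderiv (C := 0) (by simp) ht ht'

end IsLaxPairOn

theorem IsLaxPairOn.charpoly_eq {K : Type*} [NormedField K] [Infinite K] [NormedAlgebra 𝕜 K]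
    {L A : 𝕜 → Matrix ι ι K} {s : Set 𝕜} (h : IsLaxPairOn L A s) (hs : Convex ℝ s) {t t' : 𝕜}
    (ht : t ∈ s) (ht' : t' ∈ s) :
    (L t).charpoly = (L t').charpoly :=
  Polynomial.funext fun x => by
    simp only [Matrix.eval_charpoly, (h.scalar_sub x).det_eq hs ht ht']

end LaxPair

theorem Matrix.pow_eq_sum_charpoly_coeff_smul_pow {ι R : Type*} [Fintype ι] [DecidableEq ι]
    [CommRing R] [Nontrivial R] (M : Matrix ι ι R) {k : ℕ} (hk : Fintype.card ι ≤ k) :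
    M ^ k = ∑ v ∈ range (Fintype.card ι),
      -M.charpoly.coeff (Fintype.card ι - 1 - v) • M ^ (k - v - 1) := by
  set n := Fintype.card ι
  have hCH : M ^ n + ∑ i ∈ range n, M.charpoly.coeff i • M ^ i = 0 := by
    have h := M.aeval_self_charpoly
    rw [M.charpoly_monic.as_sum, M.charpoly_natDegree_eq_dim] at h
    simpa [Algebra.smul_def] using h
  calc M ^ k = M ^ (k - n) * M ^ n := by rw [← pow_add, Nat.sub_add_cancel hk]
    _ = ∑ i ∈ range n, -M.charpoly.coeff i • M ^ (k - n + i) := by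
      simp [eq_neg_of_add_eq_zero_left hCH, mul_sum, pow_add]
    _ = _ := by
      rw [← sum_range_reflect]
      refine sum_congr rfl fun v hv => ?_
      rw [show k - n + (n - 1 - v) = k - v - 1 by grind]

theorem coeff_eq_of_recurrence_of_det_ne_zero {R : Type*} [CommRing R] [IsDomain R] {n p : ℕ}
    (hp : 0 < p) (S : ℕ → ℕ → R) {C C' : ℕ → R}
    (hC : ∀ k, n ≤ k → ∀ l, 1 ≤ l → l ≤ p →
      S k l = ∑ v ∈ range n, C v * S (k - v - 1) l)
    (hC' : ∀ k, n ≤ k → ∀ l, 1 ≤ l → l ≤ p →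
      S k l = ∑ v ∈ range n, C' v * S (k - v - 1) l)
    (hdet : (Matrix.of fun i j : Fin n => S ((i : ℕ) + (j : ℕ) / p) ((j : ℕ) % p + 1)).det ≠ 0) :
    ∀ v < n, C v = C' v := by
  set e : Fin n → R := fun i => C (n - 1 - i) - C' (n - 1 - i)
  have he : Matrix.vecMul e
      (Matrix.of fun i j : Fin n => S ((i : ℕ) + (j : ℕ) / p) ((j : ℕ) % p + 1)) = 0 := by
    ext j
    have hl : (j : ℕ) % p < p := Nat.mod_lt _ hp
    have h0 : ∑ v ∈ range n, (C v - C' v) * S (n + j / p - v - 1) (j % p + 1) = 0 := by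
      simp only [sub_mul, sum_sub_distrib]
      rw [← hC (n + j / p) (Nat.le_add_right _ _) _ (by omega) (by omega),
        ← hC' (n + j / p) (Nat.le_add_right _ _) _ (by omega) (by omega), sub_self]
    rw [← sum_range_reflect] at h0
    simp only [Matrix.vecMul, dotProduct, Matrix.of_apply, Pi.zero_apply, e, ← h0]
    rw [Fin.sum_univ_eq_sum_range
      (fun i => (C (n - 1 - i) - C' (n - 1 - i)) * S (i + j / p) (j % p + 1))]
    refine sum_congr rfl fun i _ => ?_
    rw [show n + j / p - (n - 1 - i) - 1 = i + j / p by grind]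
  intro v hv
  simpa [e, sub_eq_zero, Nat.sub_sub_self (Nat.le_sub_one_of_lt hv)] using
    congrFun (Matrix.eq_zero_of_vecMul_eq_zero hdet he) ⟨n - 1 - v, by omega⟩

section Telescoping

variable {M : Type*} [AddCommGroup M] (f : ℤ → M) (c : ℤ) (p : ℕ)

theorem sum_range_succ_sub_sum_range_succ_shift :
    ∑ m ∈ range (p + 1), f (c - m) - ∑ m ∈ range (p + 1), f (c + 1 - m) =
      f (c - p) - f (c + 1) := by
  rw [sum_range_succ, sum_range_succ']
  simp only [Nat.cast_add, Nat.cast_one, Nat.cast_zero, sub_zero, add_sub_add_right_eq_sub]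
  abel

theorem sum_range_succ_reflect_sub_sum_range_succ :
    ∑ m ∈ range (p + 1), f (c + p - m) - ∑ m ∈ range (p + 1), f (c - m) =
      ∑ m ∈ Icc 1 p, f (c + m) - ∑ m ∈ Icc 1 p, f (c - m) := by
  have hsplit (g : ℕ → M) : ∑ m ∈ range (p + 1), g m = g 0 + ∑ m ∈ Icc 1 p, g m := by
    rw [range_eq_Ico, sum_eq_sum_Ico_succ_bot (Nat.succ_pos p), zero_add, Nat.succ_eq_add_one,
      Ico_add_one_right_eq_Icc]
  have hreflect : ∑ m ∈ range (p + 1), f (c + p - m) = ∑ m ∈ range (p + 1), f (c + m) := by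
    rw [← sum_range_reflect]
    exact sum_congr rfl fun m hm => congrArg f (by rw [mem_range] at hm; omega)
  rw [hreflect, hsplit, hsplit, Nat.cast_zero, add_zero, sub_zero]
  abel

end Telescoping

section Shift

variable {R : Type*} [Semiring R] {n : ℕ}

def shiftMatrix (n k : ℕ) : Matrix (Fin n) (Fin n) R :=
  Matrix.of fun i j => if (j : ℕ) = i + k then 1 else 0

theorem shiftMatrix_mul_of_apply (k : ℕ) (f : ℤ → ℤ → R)
    (hf : ∀ (i : ℤ) (j : Fin n), n ≤ i → f i j = 0) (i j : Fin n) :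
    ((shiftMatrix n k : Matrix (Fin n) (Fin n) R) * Matrix.of fun i j : Fin n => f i j) i j =
      f ((i : ℕ) + k) j := by
  rw [Matrix.mul_apply]
  by_cases h : (i : ℕ) + k < n
  · rw [sum_eq_single ⟨i + k, h⟩
      (fun m _ hm => by simp [shiftMatrix, Fin.ext_iff] at hm ⊢; omega) (by simp)]
    simp [shiftMatrix]
  · rw [sum_eq_zero fun m _ => by simp [shiftMatrix]; omega, hf _ _ (by omega)]

theorem of_mul_shiftMatrix_apply (k : ℕ) (f : ℤ → ℤ → R)
    (hf : ∀ (i : Fin n) (j : ℤ), j < 0 → f i j = 0) (i j : Fin n) :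
    ((Matrix.of fun i j : Fin n => f i j) * (shiftMatrix n k : Matrix (Fin n) (Fin n) R)) i j =
      f i ((j : ℕ) - k) := by
  rw [Matrix.mul_apply]
  by_cases h : k ≤ (j : ℕ)
  · rw [sum_eq_single ⟨j - k, by omega⟩
      (fun m _ hm => by simp [shiftMatrix, Fin.ext_iff] at hm ⊢; omega) (by simp)]
    simp [shiftMatrix, h]
  · rw [sum_eq_zero fun m _ => by simp [shiftMatrix]; omega, hf _ _ (by omega)]

end Shift

section Bogoyavlensky

variable (p N : ℕ) (bz : ℤ → ℂ)

/-- The entries of `L2N` extended to all integer indices, so that the boundary terms of products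
with `shiftMatrix` need no case distinction. -/
def L2NEntry (i j : ℤ) : ℂ :=
  if j = i + 1 then 1 else if i = j + p then bz j else 0

def L2NLaxPartner : Matrix (Fin (N + p + 1)) (Fin (N + p + 1)) ℂ :=
  shiftMatrix (N + p + 1) (p + 1) +
    Matrix.diagonal fun i : Fin (N + p + 1) => ∑ m ∈ range (p + 1), bz ((i : ℕ) - m)

theorem L2N_eq_of_L2NEntry :
    L2N p N (fun m : ℕ => bz m) =
      Matrix.of fun i j : Fin (N + p + 1) => L2NEntry p bz (i : ℕ) (j : ℕ) := by
  ext i j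
  simp only [L2N, L2NEntry, Matrix.of_apply]
  split_ifs <;> first | rfl | omega

theorem L2NEntry_commutator (a b : ℤ) :
    L2NEntry p bz (a + (p + 1)) b + (∑ m ∈ range (p + 1), bz (a - m)) * L2NEntry p bz a b -
      (L2NEntry p bz a (b - (p + 1)) + L2NEntry p bz a b * ∑ m ∈ range (p + 1), bz (b - m)) =
    if a = b + p then
      bz b * (∑ m ∈ Icc 1 p, bz (b + m) - ∑ m ∈ Icc 1 p, bz (b - m))
    else 0 := by
  unfold L2NEntry
  by_cases hba : b = a + 1
  · subst hba
    have htel := sum_range_succ_sub_sum_range_succ_shift bz a p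
    split_ifs <;> first | omega | skip
    rw [show a + 1 - (p + 1) = a - p by ring]
    linear_combination htel
  by_cases hab : a = b + p
  · subst hab
    have htel := sum_range_succ_reflect_sub_sum_range_succ bz b p
    split_ifs <;> first | omega | skip
    rw [← htel]
    ring
  · split_ifs <;> first | omega | ring

theorem L2N_commutator_apply (hbz : ∀ l : ℤ, l < 0 ∨ (N : ℤ) < l → bz l = 0)
    (i j : Fin (N + p + 1)) :
    (L2NLaxPartner p N bz * L2N p N (fun m : ℕ => bz m) -
        L2N p N (fun m : ℕ => bz m) * L2NLaxPartner p N bz) i j =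
      if (i : ℕ) = (j : ℕ) + p then
        bz (j : ℕ) * (∑ m ∈ Icc 1 p, bz ((j : ℕ) + m) - ∑ m ∈ Icc 1 p, bz ((j : ℕ) - m))
      else 0 := by
  have hrow (i : ℤ) (j : Fin (N + p + 1)) (hi : ((N + p + 1 : ℕ) : ℤ) ≤ i) :
      L2NEntry p bz i (j : ℕ) = 0 := by
    have := j.isLt
    unfold L2NEntry
    rw [if_neg (by omega)]
    split_ifs
    exacts [hbz _ (Or.inr (by omega)), rfl]
  have hcol (i : Fin (N + p + 1)) (j : ℤ) (hj : j < 0) : L2NEntry p bz (i : ℕ) j = 0 := by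
    unfold L2NEntry
    rw [if_neg (by omega)]
    split_ifs
    exacts [hbz _ (Or.inl hj), rfl]
  rw [L2N_eq_of_L2NEntry, L2NLaxPartner, Matrix.sub_apply, Matrix.add_mul, Matrix.mul_add,
    Matrix.add_apply, Matrix.add_apply, shiftMatrix_mul_of_apply _ _ hrow,
    of_mul_shiftMatrix_apply _ _ hcol, Matrix.diagonal_mul, Matrix.mul_diagonal]
  simp only [Matrix.of_apply]
  push_cast
  rw [L2NEntry_commutator]
  exact if_congr (by omega) rfl rfl

end Bogoyavlensky

theorem isLaxPairOn_L2N (p N : ℕ) (I : Set ℝ) (b : ℤ → ℝ → ℂ)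
    (hbout : ∀ l : ℤ, l < 0 ∨ (N : ℤ) < l → ∀ t : ℝ, b l t = 0)
    (hbode : ∀ i : ℤ, 0 ≤ i → i ≤ (N : ℤ) → ∀ t ∈ I, HasDerivWithinAt (b i)
      (b i t * (∑ j ∈ Icc 1 p, b (i + (j : ℤ)) t - ∑ j ∈ Icc 1 p, b (i - (j : ℤ)) t)) I t) :
    IsLaxPairOn (fun t => L2N p N fun n : ℕ => b n t)
      (fun t => L2NLaxPartner p N fun l => b l t) I := by
  intro t ht i j
  rw [L2N_commutator_apply p N (fun l => b l t) fun l hl => hbout l hl t]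
  simp only [L2N, Matrix.of_apply]
  by_cases hsup : (j : ℕ) = i + 1
  · simp only [if_pos hsup, if_neg (show (i : ℕ) ≠ j + p by omega)]
    exact hasDerivWithinAt_const _ _ _
  by_cases hsub : (i : ℕ) = j + p
  · simp only [if_neg hsup, if_pos hsub]
    exact hbode ((j : ℕ) : ℤ) (Int.natCast_nonneg _) (by have := i.isLt; omega) t ht
  · simp only [if_neg hsup, if_neg hsub]
    exact hasDerivWithinAt_const _ _ _

theorem momL2N_eq_sum_charpoly_coeff_mul (p N : ℕ) (b : ℕ → ℂ) {k : ℕ} (hk : N + p + 1 ≤ k)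
    (l : ℕ) :
    momL2N p N b k l = ∑ v ∈ range (N + p + 1),
      -(L2N p N b).charpoly.coeff (N + p - v) * momL2N p N b (k - v - 1) l := by
  have h := (L2N p N b).pow_eq_sum_charpoly_coeff_smul_pow (k := k) (by simpa using hk)
  simp only [Fintype.card_fin, add_tsub_cancel_right] at h
  simp only [momL2N, h, Matrix.sum_apply, Matrix.smul_apply, smul_eq_mul]

theorem FRC_Ctilde_first_integrals_general (p N : ℕ) (hp : 1 ≤ p)
    (I : Set ℝ) (hI : I.OrdConnected)
    (b : ℤ → ℝ → ℂ)
    (hbout : ∀ l : ℤ, l < 0 ∨ (N : ℤ) < l → ∀ t : ℝ, b l t = 0)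
    (hbode : ∀ i : ℤ, 0 ≤ i → i ≤ (N : ℤ) → ∀ t ∈ I, HasDerivWithinAt (b i)
      (b i t * (∑ j ∈ Finset.Icc 1 p, b (i + (j : ℤ)) t -
        ∑ j ∈ Finset.Icc 1 p, b (i - (j : ℤ)) t)) I t)
    (Ct : ℕ → ℝ → ℂ)
    (hCtrel : ∀ k, N + p + 1 ≤ k → ∀ l, 1 ≤ l → l ≤ p → ∀ t ∈ I,
      momL2N p N (fun n : ℕ => b (n : ℤ) t) k l =
        ∑ v ∈ Finset.range (N + p + 1), Ct v t *
          momL2N p N (fun n : ℕ => b (n : ℤ) t) (k - v - 1) l)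
    (hΔ : ∀ t ∈ I, Matrix.det (Matrix.of fun i j : Fin (N + p + 1) =>
        momL2N p N (fun n : ℕ => b (n : ℤ) t) ((i : ℕ) + (j : ℕ) / p) ((j : ℕ) % p + 1)) ≠ 0) :
    ∀ v, v ≤ N + p → ∀ t ∈ I, ∀ s ∈ I, Ct v t = Ct v s := by
  intro v hv t ht s hs
  set L : ℝ → Matrix (Fin (N + p + 1)) (Fin (N + p + 1)) ℂ :=
    fun u => L2N p N fun n : ℕ => b n u
  have hCt_eq_charpoly_coeff : ∀ u ∈ I, Ct v u = -(L u).charpoly.coeff (N + p - v) :=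
    fun u hu => coeff_eq_of_recurrence_of_det_ne_zero hp _
      (C := fun w => Ct w u) (C' := fun w => -(L u).charpoly.coeff (N + p - w))
      (fun k hk l hl hlp => hCtrel k hk l hl hlp u hu)
      (fun k hk l _ _ => momL2N_eq_sum_charpoly_coeff_mul p N _ hk l) (hΔ u hu) v (by omega)
  rw [hCt_eq_charpoly_coeff t ht, hCt_eq_charpoly_coeff s hs,
    (isLaxPairOn_L2N p N I b hbout hbode).charpoly_eq hI.convex ht hs]

/-- The finite rank coefficients `C̃_0, …, C̃_{N+p}` are first integrals of the finite
Bogoyavlensky lattice `b_i' = b_i (Σ_{j=1}^p b_{i+j} − Σ_{j=1}^p b_{i−j})`. -/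
theorem FRC_Ctilde_first_integrals (p N : ℕ) (hp : 1 ≤ p) (hN : 2 * p - 1 ≤ N)
    (I : Set ℝ) (hI : I.OrdConnected)
    (b : ℤ → ℝ → ℂ)
    (hbout : ∀ l : ℤ, l < 0 ∨ (N : ℤ) < l → ∀ t : ℝ, b l t = 0)
    (hbne : ∀ i : ℤ, 0 ≤ i → i ≤ (N : ℤ) → ∀ t ∈ I, b i t ≠ 0)
    (hbode : ∀ i : ℤ, 0 ≤ i → i ≤ (N : ℤ) → ∀ t ∈ I, HasDerivWithinAt (b i)
      (b i t * (∑ j ∈ Finset.Icc 1 p, b (i + (j : ℤ)) t -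
        ∑ j ∈ Finset.Icc 1 p, b (i - (j : ℤ)) t)) I t)
    (Ct : ℕ → ℝ → ℂ)
    (hCtdiff : ∀ v, v ≤ N + p → ∀ t ∈ I, DifferentiableWithinAt ℝ (Ct v) I t)
    (hCtrel : ∀ k, N + p + 1 ≤ k → ∀ l, 1 ≤ l → l ≤ p → ∀ t ∈ I,
      momL2N p N (fun n : ℕ => b (n : ℤ) t) k l =
        ∑ v ∈ Finset.range (N + p + 1), Ct v t *
          momL2N p N (fun n : ℕ => b (n : ℤ) t) (k - v - 1) l)
    (hΔ : ∀ t ∈ I, Matrix.det (Matrix.of fun i j : Fin (N + p + 1) =>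
        momL2N p N (fun n : ℕ => b (n : ℤ) t) ((i : ℕ) + (j : ℕ) / p) ((j : ℕ) % p + 1)) ≠ 0) :
    ∀ v, v ≤ N + p → ∀ t ∈ I, ∀ s ∈ I, Ct v t = Ct v s :=
  FRC_Ctilde_first_integrals_general p N hp I hI b hbout hbode Ct hCtrel hΔ
end
end

section
/- Let p ≥ 1 and N ≥ 2p−1. (1) Let a_0,…,a_N be nonzero complex numbers, L1_N the associated matrix with moments S_k^m, and write det(λI − L1_N) = λ^{N+2} + c_0 λ^{N+1} + ⋯ + c_{N+1}. If C_0,…,C_{N+1} ∈ ℂ satisfy S_k^l = Σ_{v=0}^{N+1} C_v S_{k−v−1}^l for all k ≥ N+2 and 1 ≤ l ≤ p, and Δ_{N+1} ≠ 0 where Δ_{N+1} = det(S_{⌊i/p⌋+j}^{(i mod p)+1})_{i,j=0}^{N+1}, then C_v = −c_v for v = 0,…,N+1. (2) Let b_0,…,b_N be nonzero complex numbers, L2_N the associated matrix with moments S̃_k^n, and write det(λI − L2_N) = λ^{N+p+1} + c̃_0 λ^{N+p} + ⋯ + c̃_{N+p}. If C̃_0,…,C̃_{N+p} ∈ ℂ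 satisfy S̃_k^l = Σ_{v=0}^{N+p} C̃_v S̃_{k−v−1}^l for all k ≥ N+p+1 and 1 ≤ l ≤ p, and Δ̃_{N+p} = det(S̃_{i+⌊j/p⌋}^{(j mod p)+1})_{i,j=0}^{N+p} ≠ 0, then C̃_v = −c̃_v for v = 0,…,N+p. -/
open scoped BigOperators

noncomputable section

/-- The `(N+2)×(N+2)` matrix `L1_N`: `(L1_N)_{i,i+p} = 1`, `(L1_N)_{i+1,i} = a_i`,
all other entries zero. -/
def L1N (p N : ℕ) (a : ℕ → ℂ) : Matrix (Fin (N + 2)) (Fin (N + 2)) ℂ :=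
  Matrix.of fun i j => if (j : ℕ) = (i : ℕ) + p then 1
    else if (i : ℕ) = (j : ℕ) + 1 then a (j : ℕ) else 0

open Fin.NatCast in
/-- The moments of `L1_N`: `S_k^m = (L1_N^k)_{m−1,0}`. -/
def momL1N (p N : ℕ) (a : ℕ → ℂ) (k m : ℕ) : ℂ :=
  (L1N p N a ^ k) ((m - 1 : ℕ) : Fin (N + 2)) ((0 : ℕ) : Fin (N + 2))

/-!
By Cayley–Hamilton every moment sequence `k ↦ (L^k)_{i,j}` satisfies the linear recurrence whose
coefficients are the negated coefficients of the characteristic polynomial. Subtracting this from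
the assumed recurrence, the differences `C_v + c_v` (read backwards) form a vector killed by the
matrix of shifted moments, whose determinant is `Δ`; so they vanish. For `L2_N` the matrix of
moments appears transposed.
-/

open Finset Polynomial
open scoped Matrix

def IsLinearRecurrence {R : Type*} [Semiring R] (n : ℕ) (α : ℕ → R) (t : ℕ → R) : Prop :=
  ∀ k, n ≤ k → t k = ∑ v ∈ range n, α v * t (k - v - 1)

namespace IsLinearRecurrence

variable {R : Type*} [Semiring R] {n : ℕ} {α : ℕ → R} {t : ℕ → R}

theorem shift (h : IsLinearRecurrence n α t) (q : ℕ) :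
    IsLinearRecurrence n α (fun k => t (q + k)) := by
  intro k hk
  dsimp only
  rw [h (q + k) (by omega)]
  refine sum_congr rfl fun v hv => ?_
  have := mem_range.mp hv
  congr 2
  omega

theorem coeff_eq_of_det_ne_zero {K : Type*} [Field K] {α β : ℕ → K} {t : Fin n → ℕ → K}
    (hα : ∀ i, IsLinearRecurrence n α (t i)) (hβ : ∀ i, IsLinearRecurrence n β (t i))
    (hdet : (Matrix.of fun i j : Fin n => t i j).det ≠ 0) {v : ℕ} (hv : v < n) :
    α v = β v := by
  set x : Fin n → K := fun j => α (n - 1 - j) - β (n - 1 - j)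
  have hx : (Matrix.of fun i j : Fin n => t i j) *ᵥ x = 0 := by
    funext i
    have hrow : ∑ v ∈ range n, (α v - β v) * t i (n - v - 1) = 0 := by
      simp only [sub_mul, sum_sub_distrib, ← hα i n le_rfl, ← hβ i n le_rfl, sub_self]
    rw [← sum_range_reflect] at hrow
    simp only [Matrix.mulVec, dotProduct, Matrix.of_apply, Pi.zero_apply, x]
    rw [Fin.sum_univ_eq_sum_range (fun j => t i j * (α (n - 1 - j) - β (n - 1 - j))), ← hrow]
    refine sum_congr rfl fun j hj => ?_
    have := mem_range.mp hj
    rw [mul_comm, show n - (n - 1 - j) - 1 = j by omega]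
  have := congrFun (Matrix.eq_zero_of_mulVec_eq_zero hdet hx) ⟨n - 1 - v, by omega⟩
  simp only [x, Pi.zero_apply, show n - 1 - (n - 1 - v) = v by omega] at this
  exact sub_eq_zero.mp this

end IsLinearRecurrence

namespace Matrix

variable {R ι : Type*} [CommRing R] [Fintype ι] [DecidableEq ι]

theorem pow_eq_sum_of_charpoly_eq {M : Matrix ι ι R} {c : ℕ → R} {d : ℕ}
    (h : M.charpoly = X ^ (d + 1) + ∑ v ∈ range (d + 1), C (c v) * X ^ (d - v))
    {k : ℕ} (hk : d + 1 ≤ k) :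
    M ^ k = ∑ v ∈ range (d + 1), (-c v) • M ^ (k - v - 1) := by
  have hCH := aeval_self_charpoly M
  simp only [h, map_add, map_sum, map_mul, map_pow, aeval_X, aeval_C] at hCH
  have hd : M ^ (d + 1) = ∑ v ∈ range (d + 1), (-c v) • M ^ (d - v) := by
    rw [eq_neg_of_add_eq_zero_left hCH, ← sum_neg_distrib]
    exact sum_congr rfl fun v _ => by rw [neg_smul, Algebra.smul_def]
  calc M ^ k = M ^ (k - (d + 1)) * M ^ (d + 1) := by rw [← pow_add]; congr 1; omega
    _ = ∑ v ∈ range (d + 1), (-c v) • (M ^ (k - (d + 1)) * M ^ (d - v)) := by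
        simp only [hd, mul_sum, mul_smul_comm]
    _ = ∑ v ∈ range (d + 1), (-c v) • M ^ (k - v - 1) := by
        refine sum_congr rfl fun v hv => ?_
        have := mem_range.mp hv
        rw [← pow_add]
        congr 2
        omega

theorem isLinearRecurrence_pow_apply {M : Matrix ι ι R} {c : ℕ → R} {d : ℕ}
    (h : M.charpoly = X ^ (d + 1) + ∑ v ∈ range (d + 1), C (c v) * X ^ (d - v)) (i j : ι) :
    IsLinearRecurrence (d + 1) (fun v => -c v) (fun k => (M ^ k) i j) := by
  intro k hk
  simp [pow_eq_sum_of_charpoly_eq h hk, sum_apply]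

end Matrix

theorem FRC_eq_charpoly_coeffs_general (p N : ℕ) (hp : 1 ≤ p)
    (a b : ℕ → ℂ)
    (c : ℕ → ℂ)
    (hc : (L1N p N a).charpoly = Polynomial.X ^ (N + 2) +
      ∑ v ∈ Finset.range (N + 2), Polynomial.C (c v) * Polynomial.X ^ (N + 1 - v))
    (ct : ℕ → ℂ)
    (hct : (L2N p N b).charpoly = Polynomial.X ^ (N + p + 1) +
      ∑ v ∈ Finset.range (N + p + 1), Polynomial.C (ct v) * Polynomial.X ^ (N + p - v))
    (C : ℕ → ℂ)
    (hC : ∀ k, N + 2 ≤ k → ∀ l, 1 ≤ l → l ≤ p →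
      momL1N p N a k l = ∑ v ∈ Finset.range (N + 2), C v * momL1N p N a (k - v - 1) l)
    (hΔ : Matrix.det (Matrix.of fun i j : Fin (N + 2) =>
      momL1N p N a ((i : ℕ) / p + (j : ℕ)) ((i : ℕ) % p + 1)) ≠ 0)
    (Ct : ℕ → ℂ)
    (hCt : ∀ k, N + p + 1 ≤ k → ∀ l, 1 ≤ l → l ≤ p →
      momL2N p N b k l = ∑ v ∈ Finset.range (N + p + 1), Ct v * momL2N p N b (k - v - 1) l)
    (hΔt : Matrix.det (Matrix.of fun i j : Fin (N + p + 1) =>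
      momL2N p N b ((i : ℕ) + (j : ℕ) / p) ((j : ℕ) % p + 1)) ≠ 0) :
    (∀ v, v ≤ N + 1 → C v = -c v) ∧ (∀ v, v ≤ N + p → Ct v = -ct v) := by
  have hrow (i : ℕ) : i % p + 1 ≤ p := Nat.mod_lt i hp
  refine ⟨fun v hv => ?_, fun v hv => ?_⟩
  · exact IsLinearRecurrence.coeff_eq_of_det_ne_zero
      (t := fun i k => momL1N p N a (i / p + k) (i % p + 1))
      (fun i => IsLinearRecurrence.shift (fun k hk => hC k hk _ (by omega) (hrow i)) _)
      (fun i => (Matrix.isLinearRecurrence_pow_apply hc _ _).shift _) hΔ (by omega)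
  · have hΔt' : (Matrix.of fun j k : Fin (N + p + 1) =>
        momL2N p N b (j / p + k) (j % p + 1)).det ≠ 0 := by
      rw [← Matrix.det_transpose]
      convert hΔt using 3
      ext i j
      simp only [Matrix.transpose_apply, Matrix.of_apply, add_comm]
    exact IsLinearRecurrence.coeff_eq_of_det_ne_zero
      (t := fun j k => momL2N p N b (j / p + k) (j % p + 1))
      (fun j => IsLinearRecurrence.shift (fun k hk => hCt k hk _ (by omega) (hrow j)) _)
      (fun j => (Matrix.isLinearRecurrence_pow_apply hct _ _).shift _)
      hΔt' (by omega)

/-- The finite rank coefficients `C` and `C̃` coincide, up to sign, with the coefficients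
of the characteristic polynomials of `L1_N` and `L2_N` respectively. -/
theorem FRC_eq_charpoly_coeffs (p N : ℕ) (hp : 1 ≤ p) (hN : 2 * p - 1 ≤ N)
    (a b : ℕ → ℂ) (ha : ∀ i ≤ N, a i ≠ 0) (hb : ∀ i ≤ N, b i ≠ 0)
    (c : ℕ → ℂ)
    (hc : (L1N p N a).charpoly = Polynomial.X ^ (N + 2) +
      ∑ v ∈ Finset.range (N + 2), Polynomial.C (c v) * Polynomial.X ^ (N + 1 - v))
    (ct : ℕ → ℂ)
    (hct : (L2N p N b).charpoly = Polynomial.X ^ (N + p + 1) +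
      ∑ v ∈ Finset.range (N + p + 1), Polynomial.C (ct v) * Polynomial.X ^ (N + p - v))
    (C : ℕ → ℂ)
    (hC : ∀ k, N + 2 ≤ k → ∀ l, 1 ≤ l → l ≤ p →
      momL1N p N a k l = ∑ v ∈ Finset.range (N + 2), C v * momL1N p N a (k - v - 1) l)
    (hΔ : Matrix.det (Matrix.of fun i j : Fin (N + 2) =>
      momL1N p N a ((i : ℕ) / p + (j : ℕ)) ((i : ℕ) % p + 1)) ≠ 0)
    (Ct : ℕ → ℂ)
    (hCt : ∀ k, N + p + 1 ≤ k → ∀ l, 1 ≤ l → l ≤ p →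
      momL2N p N b k l = ∑ v ∈ Finset.range (N + p + 1), Ct v * momL2N p N b (k - v - 1) l)
    (hΔt : Matrix.det (Matrix.of fun i j : Fin (N + p + 1) =>
      momL2N p N b ((i : ℕ) + (j : ℕ) / p) ((j : ℕ) % p + 1)) ≠ 0) :
    (∀ v, v ≤ N + 1 → C v = -c v) ∧ (∀ v, v ≤ N + p → Ct v = -ct v) :=
  FRC_eq_charpoly_coeffs_general p N hp a b c hc ct hct C hC hΔ Ct hCt hΔt
end
end
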